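/- Let d ≥ 1, let ν ≥ 1/2, let 0 < ℓ ≤ (log 2)^{-1}√(ν/(2d)), let 0 < h ≤ (1 + √(8ν)ℓ)^{-1}, and let m ∈ ℕ with m ≥ 1. Then the truncation error for the Matérn kernel is bounded uniformly over x ∈ ℝ^d by | h^d Σ_{j ∈ ℤ^d, j ∉ J_m} Ĉ_{ν,ℓ}(jh) e^{2πih⟨j,x⟩} | ≤ (ν^{ν−1} d 5^{d−1} / (2^ν π^{d/2+2ν})) · (Γ(ν+d/2)/Γ(ν)) · (hℓm)^{−2ν}. -/

import Mathlib

/-- The Matérn spectral density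
`Ĉ_{ν,ℓ}(ξ) = ĉ_{d,ν} (ℓ/√(2ν))^d (2ν + |2πℓξ|²)^{−ν−d/2}` with
`ĉ_{d,ν} = 2^d π^{d/2} (2ν)^ν Γ(ν+d/2)/Γ(ν)`. -/
noncomputable def Chat (d : ℕ) (ν ℓ : ℝ) (ξ : EuclideanSpace ℝ (Fin d)) : ℝ :=
  (2 ^ d * Real.pi ^ ((d : ℝ) / 2) * (2 * ν) ^ ν *
      Real.Gamma (ν + (d : ℝ) / 2) / Real.Gamma ν) *
    (ℓ / Real.sqrt (2 * ν)) ^ d *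
      (2 * ν + (2 * Real.pi * ℓ) ^ 2 * ‖ξ‖ ^ 2) ^ (-(ν + (d : ℝ) / 2))

/-- The lattice point `c·n ∈ ℝ^d` for `n ∈ ℤ^d` and a scalar `c`. -/
noncomputable def lpt (d : ℕ) (c : ℝ) (n : Fin d → ℤ) : EuclideanSpace ℝ (Fin d) :=
  (EuclideanSpace.equiv (Fin d) ℝ).symm (fun i => c * (n i : ℝ))

/-- The cube `J_m = {−m,…,m}^d ⊂ ℤ^d`. -/
noncomputable def Jm (d m : ℕ) : Finset (Fin d → ℤ) := Finset.Icc (fun _ => -(m : ℤ)) (fun _ => (m : ℤ))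

/-!
Every term has modulus `Ĉ(jh)`, and `Ĉ(ξ) ≤ c (2πℓ|ξ|)^{-2ν-d}` once the `2ν` in the base is
dropped. The shell `J_{n+1} \ J_n` has at most `2d (3(n+1))^{d-1}` points `j`, all with
`|jh| ≥ h(n+1)`, so it contributes `O((n+1)^{-2ν-1})`. Since `2ν (n+1)^{-2ν-1} ≤ n^{-2ν} - (n+1)^{-2ν}`,
the shells beyond `J_m` telescope to `O(m^{-2ν})`; the resulting constant carries the factor
`3^{d-1} (2ν)^{-d/2} ≤ 5^{d-1}`.
-/

open Real Finset

noncomputable def maternConst (d : ℕ) (ν ℓ : ℝ) : ℝ :=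
  (2 ^ d * π ^ ((d : ℝ) / 2) * (2 * ν) ^ ν * Gamma (ν + (d : ℝ) / 2) / Gamma ν) *
    (ℓ / √(2 * ν)) ^ d

noncomputable def shellConst (d : ℕ) (ν ℓ h : ℝ) : ℝ :=
  2 * d * 3 ^ (d - 1) * maternConst d ν ℓ * (2 * π * ℓ * h) ^ (-(2 * ν + d))

section Matern

variable {d : ℕ} {ν ℓ : ℝ}

lemma Chat_eq_maternConst_mul (ξ : EuclideanSpace ℝ (Fin d)) :
    Chat d ν ℓ ξ =
      maternConst d ν ℓ * (2 * ν + (2 * π * ℓ) ^ 2 * ‖ξ‖ ^ 2) ^ (-(ν + d / 2)) :=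
  rfl

lemma maternConst_pos (hν : 0 < ν) (hℓ : 0 < ℓ) : 0 < maternConst d ν ℓ := by
  have := Gamma_pos_of_pos hν
  have := Gamma_pos_of_pos (by positivity : 0 < ν + (d : ℝ) / 2)
  unfold maternConst
  positivity

lemma shellConst_nonneg {h : ℝ} (hν : 0 < ν) (hℓ : 0 < ℓ) (hh : 0 < h) :
    0 ≤ shellConst d ν ℓ h := by
  have := maternConst_pos (d := d) hν hℓ
  unfold shellConst
  positivity

lemma Chat_nonneg (hν : 0 < ν) (hℓ : 0 < ℓ) (ξ : EuclideanSpace ℝ (Fin d)) :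
    0 ≤ Chat d ν ℓ ξ := by
  have := maternConst_pos (d := d) hν hℓ
  rw [Chat_eq_maternConst_mul]
  positivity

lemma Chat_le_maternConst_mul_rpow (hν : 0 < ν) (hℓ : 0 < ℓ) {ξ : EuclideanSpace ℝ (Fin d)}
    {t : ℝ} (ht : 0 < t) (htξ : t ≤ 2 * π * ℓ * ‖ξ‖) :
    Chat d ν ℓ ξ ≤ maternConst d ν ℓ * t ^ (-(2 * ν + d)) := by
  have hbase : t ^ 2 ≤ 2 * ν + (2 * π * ℓ) ^ 2 * ‖ξ‖ ^ 2 := by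
    nlinarith [pow_le_pow_left₀ ht.le htξ 2]
  have hexp : -(ν + d / 2) ≤ 0 := by
    have : (0 : ℝ) ≤ d / 2 := by positivity
    linarith
  have hpow : t ^ (-(2 * ν + d)) = (t ^ 2) ^ (-(ν + d / 2)) := by
    rw [← rpow_natCast, ← rpow_mul ht.le]
    ring_nf
  rw [Chat_eq_maternConst_mul, hpow]
  exact mul_le_mul_of_nonneg_left (rpow_le_rpow_of_nonpos (by positivity) hbase hexp)
    (maternConst_pos hν hℓ).le

end Matern

section Cube

variable {d : ℕ}

lemma mem_Jm_iff_abs_le {k : ℕ} {j : Fin d → ℤ} : j ∈ Jm d k ↔ ∀ i, |j i| ≤ k := by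
  simp [Jm, Pi.le_def, abs_le, forall_and]

lemma Jm_mono : Monotone (Jm d) := fun _ _ hmn _ hj =>
  mem_Jm_iff_abs_le.2 fun i => (mem_Jm_iff_abs_le.1 hj i).trans (by exact_mod_cast hmn)

lemma card_Jm (k : ℕ) : #(Jm d k) = (2 * k + 1) ^ d := by
  simp only [Jm, Pi.card_Icc, Int.card_Icc, prod_const, card_univ, Fintype.card_fin]
  congr 1
  omega

lemma card_Jm_succ_sdiff_le (n : ℕ) :
    #(Jm d (n + 1) \ Jm d n) ≤ 2 * d * (3 * (n + 1)) ^ (d - 1) := by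
  have hshell : #(Jm d (n + 1) \ Jm d n) ≤ 2 * d * (2 * n + 3) ^ (d - 1) := by
    rw [card_sdiff_of_subset (Jm_mono n.le_succ), card_Jm, card_Jm]
    grind [abs_pow_sub_pow_le (α := ℤ) (2 * n + 3) (2 * n + 1) d]
  exact hshell.trans (by gcongr; omega)

lemma exists_subset_Jm (F : Finset (Fin d → ℤ)) : ∃ N, F ⊆ Jm d N := by
  refine ⟨F.sup fun j => univ.sup fun i => (j i).natAbs,
    fun j hj => mem_Jm_iff_abs_le.2 fun i => ?_⟩
  rw [Int.abs_eq_natAbs, Int.ofNat_le]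
  exact (le_sup (f := fun i => (j i).natAbs) (mem_univ i)).trans
    (le_sup (f := fun j : Fin d → ℤ => univ.sup fun i => (j i).natAbs) hj)

lemma lpt_apply (c : ℝ) (j : Fin d → ℤ) (i : Fin d) : lpt d c j i = c * j i := rfl

lemma mul_succ_le_norm_lpt {c : ℝ} (hc : 0 ≤ c) {n : ℕ} {j : Fin d → ℤ} (hj : j ∉ Jm d n) :
    c * (n + 1) ≤ ‖lpt d c j‖ := by
  obtain ⟨i, hi⟩ := not_forall.1 (mt mem_Jm_iff_abs_le.2 hj)
  have hi : (n : ℝ) + 1 ≤ |(j i : ℝ)| := by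
    rw [← Int.cast_abs]
    exact_mod_cast Int.lt_iff_add_one_le.1 (not_le.1 hi)
  calc c * (n + 1) ≤ c * |(j i : ℝ)| := by gcongr
    _ = ‖lpt d c j i‖ := by rw [lpt_apply, norm_mul, Real.norm_of_nonneg hc, Real.norm_eq_abs]
    _ ≤ ‖lpt d c j‖ := PiLp.norm_apply_le _ i

lemma summable_and_tsum_le_of_sum_Jm_sdiff_le {f : (Fin d → ℤ) → ℝ} (hf : ∀ j, 0 ≤ f j)
    (m : ℕ) {c : ℝ} (hc : ∀ K, ∑ j ∈ Jm d (m + K) \ Jm d m, f j ≤ c) :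
    Summable (fun j : {j // j ∉ Jm d m} => f j) ∧ ∑' j : {j // j ∉ Jm d m}, f j ≤ c := by
  have hfin (u : Finset {j // j ∉ Jm d m}) : ∑ j ∈ u, f j ≤ c := by
    obtain ⟨N, hN⟩ := exists_subset_Jm (u.map (Function.Embedding.subtype _))
    calc ∑ j ∈ u, f j = ∑ j ∈ u.map (Function.Embedding.subtype _), f j :=
          (sum_map u (Function.Embedding.subtype _) f).symm
      _ ≤ ∑ j ∈ Jm d (m + N) \ Jm d m, f j := by
          refine sum_le_sum_of_subset_of_nonneg (fun j hj => mem_sdiff.2 ⟨?_, ?_⟩)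
            fun j _ _ => hf j
          · exact Jm_mono (Nat.le_add_left N m) (hN hj)
          · obtain ⟨i, -, rfl⟩ := mem_map.1 hj
            exact i.2
      _ ≤ c := hc N
  exact ⟨summable_of_sum_le (fun j => hf j) hfin, Real.tsum_le_of_sum_le (fun j => hf j) hfin⟩

end Cube

lemma mul_rpow_neg_le_rpow_neg_sub_rpow_neg {p a : ℝ} (hp : 0 ≤ p) (ha : 0 < a) :
    p * (a + 1) ^ (-(p + 1)) ≤ a ^ (-p) - (a + 1) ^ (-p) := by
  have hlog : (a + 1)⁻¹ ≤ log ((a + 1) / a) := by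
    have := one_sub_inv_le_log_of_pos (x := (a + 1) / a) (by positivity)
    rwa [inv_div, show 1 - a / (a + 1) = (a + 1)⁻¹ by field_simp; ring] at this
  have hratio : 1 + p * (a + 1)⁻¹ ≤ ((a + 1) / a) ^ p := by
    rw [rpow_def_of_pos (by positivity)]
    nlinarith [add_one_le_exp (log ((a + 1) / a) * p)]
  have hX : 0 < (a + 1) ^ (-p) := by positivity
  have ha' : a ^ (-p) = ((a + 1) / a) ^ p * (a + 1) ^ (-p) := by
    rw [div_rpow (by positivity) ha.le, rpow_neg ha.le,
      rpow_neg (by positivity : (0 : ℝ) ≤ a + 1)]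
    field_simp
  have hsucc : (a + 1) ^ (-(p + 1)) = (a + 1) ^ (-p) * (a + 1)⁻¹ := by
    rw [neg_add, rpow_add (by positivity), rpow_neg_one]
  rw [ha', hsucc]
  nlinarith [mul_le_mul_of_nonneg_left hratio hX.le]

lemma sum_range_mul_rpow_neg_le {p a : ℝ} (hp : 0 ≤ p) (ha : 0 < a) (K : ℕ) :
    ∑ k ∈ range K, p * (a + k + 1) ^ (-(p + 1)) ≤ a ^ (-p) :=
  calc ∑ k ∈ range K, p * (a + k + 1) ^ (-(p + 1))
      ≤ ∑ k ∈ range K, ((a + k) ^ (-p) - (a + (k + 1 : ℕ)) ^ (-p)) := by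
        gcongr with k
        rw [Nat.cast_succ, ← add_assoc]
        exact mul_rpow_neg_le_rpow_neg_sub_rpow_neg hp (by positivity)
    _ = a ^ (-p) - (a + K) ^ (-p) := by
        rw [sum_range_sub' (fun k : ℕ => (a + k) ^ (-p))]
        simp
    _ ≤ a ^ (-p) := sub_le_self _ (by positivity)

section Tail

variable {d : ℕ} {ν ℓ h : ℝ}

lemma sum_shell_Chat_le (hd : 0 < d) (hν : 0 < ν) (hℓ : 0 < ℓ) (hh : 0 < h) (n : ℕ) :
    ∑ j ∈ Jm d (n + 1) \ Jm d n, Chat d ν ℓ (lpt d h j)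
      ≤ shellConst d ν ℓ h * (n + 1) ^ (-(2 * ν + 1)) := by
  set bound := maternConst d ν ℓ * (2 * π * ℓ * h * (n + 1)) ^ (-(2 * ν + d)) with hbound
  have hterm : ∀ j ∈ Jm d (n + 1) \ Jm d n, Chat d ν ℓ (lpt d h j) ≤ bound :=
    fun j hj => Chat_le_maternConst_mul_rpow hν hℓ (by positivity) (by
      rw [mul_assoc _ h]
      gcongr
      exact mul_succ_le_norm_lpt hh.le (mem_sdiff.1 hj).2)
  have := maternConst_pos (d := d) hν hℓ
  calc ∑ j ∈ Jm d (n + 1) \ Jm d n, Chat d ν ℓ (lpt d h j)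
      ≤ #(Jm d (n + 1) \ Jm d n) * bound := by
        simpa using sum_le_card_nsmul _ _ _ hterm
    _ ≤ ((2 * d * (3 * (n + 1)) ^ (d - 1) : ℕ) : ℝ) * bound := by
        gcongr
        exact card_Jm_succ_sdiff_le n
    _ = shellConst d ν ℓ h * ((n + 1 : ℝ) ^ (d - 1) * (n + 1 : ℝ) ^ (-(2 * ν + d))) := by
        rw [hbound, shellConst, mul_rpow (by positivity) (by positivity)]
        push_cast [mul_pow]
        ring
    _ = shellConst d ν ℓ h * (n + 1) ^ (-(2 * ν + 1)) := by
        rw [← rpow_natCast, ← rpow_add (by positivity), Nat.cast_sub hd]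
        ring_nf

lemma sum_Jm_sdiff_Chat_le (hd : 0 < d) (hν : 0 < ν) (hℓ : 0 < ℓ) (hh : 0 < h) {m : ℕ}
    (hm : 0 < m) (K : ℕ) :
    ∑ j ∈ Jm d (m + K) \ Jm d m, Chat d ν ℓ (lpt d h j)
      ≤ shellConst d ν ℓ h * m ^ (-(2 * ν)) / (2 * ν) := by
  have hmono : Monotone fun k => Jm d (m + k) :=
    Jm_mono.comp fun _ _ hk => Nat.add_le_add_left hk m
  have := shellConst_nonneg (d := d) hν hℓ hh
  calc ∑ j ∈ Jm d (m + K) \ Jm d m, Chat d ν ℓ (lpt d h j)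
      = ∑ k ∈ range K, ∑ j ∈ Jm d (m + k + 1) \ Jm d (m + k), Chat d ν ℓ (lpt d h j) := by
        rw [sum_sdiff_eq_sub (Jm_mono (Nat.le_add_right m K)), sum_eq_sum_range_sdiff _ hmono]
        simp [add_assoc]
    _ ≤ ∑ k ∈ range K, shellConst d ν ℓ h * ((m + k : ℕ) + 1 : ℝ) ^ (-(2 * ν + 1)) := by
        gcongr with k
        exact sum_shell_Chat_le hd hν hℓ hh (m + k)
    _ = shellConst d ν ℓ h / (2 * ν) *
          ∑ k ∈ range K, 2 * ν * ((m : ℝ) + k + 1) ^ (-(2 * ν + 1)) := by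
        rw [mul_sum]
        refine sum_congr rfl fun k _ => ?_
        push_cast
        field_simp
    _ ≤ shellConst d ν ℓ h / (2 * ν) * m ^ (-(2 * ν)) := by
        gcongr
        exact sum_range_mul_rpow_neg_le (by positivity) (by positivity) K
    _ = shellConst d ν ℓ h * m ^ (-(2 * ν)) / (2 * ν) := by ring

lemma pow_mul_shellConst_mul_rpow_le (hd : 0 < d) (hν : 1 / 2 ≤ ν) (hℓ : 0 < ℓ) (hh : 0 < h)
    {M : ℝ} (hM : 0 < M) :
    h ^ d * (shellConst d ν ℓ h * M ^ (-(2 * ν)) / (2 * ν))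
      ≤ ν ^ (ν - 1) * d * 5 ^ (d - 1) / (2 ^ ν * π ^ ((d : ℝ) / 2 + 2 * ν)) *
          (Gamma (ν + d / 2) / Gamma ν) * (h * ℓ * M) ^ (-(2 * ν)) := by
  have hν0 : 0 < ν := by linarith
  have := Gamma_pos_of_pos hν0
  have := Gamma_pos_of_pos (by positivity : 0 < ν + (d : ℝ) / 2)
  have hd_sub : ((d - 1 : ℕ) : ℝ) = d - 1 := by rw [Nat.cast_sub hd]; simp
  have hd_one : (1 : ℝ) ≤ d := by exact_mod_cast hd
  have h35 : log 3 ≤ log 5 := log_le_log (by norm_num) (by norm_num)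
  have h2ν : 0 ≤ log 2 + log ν := by
    rw [← log_mul (by norm_num) hν0.ne']
    exact log_nonneg (by linarith)
  rw [← log_le_log_iff (by unfold shellConst maternConst; positivity) (by positivity)]
  simp (disch := positivity) only [shellConst, maternConst, log_mul, log_div, log_pow, log_rpow,
    log_sqrt, hd_sub]
  -- the two logarithms differ by `(d - 1) (log 3 - log 5) - (d / 2) log (2ν) ≤ 0`
  linarith [mul_nonneg (sub_nonneg.2 hd_one) (sub_nonneg.2 h35),
    mul_nonneg (by linarith : (0 : ℝ) ≤ d) h2ν]

end Tail

lemma norm_ofReal_mul_exp_two_pi_I_mul (r c t : ℝ) :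
    ‖(r : ℂ) * Complex.exp (2 * π * Complex.I * c * t)‖ = |r| := by
  rw [norm_mul, Complex.norm_real, Real.norm_eq_abs,
    show (2 * π * Complex.I * c * t : ℂ) = ((2 * π * c * t : ℝ) : ℂ) * Complex.I by
      push_cast; ring,
    Complex.norm_exp_ofReal_mul_I, mul_one]

theorem stmt_4_general (d : ℕ) (ν : ℝ) (hν : 1 / 2 ≤ ν) (ℓ : ℝ) (hℓ0 : 0 < ℓ)
    (h : ℝ) (hh0 : 0 < h) (m : ℕ) (hm : 1 ≤ m)
    (x : EuclideanSpace ℝ (Fin d)) :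
    ‖(h : ℂ) ^ d * ∑' j : {j : Fin d → ℤ // j ∉ Jm d m},
        (Chat d ν ℓ (lpt d h j.1) : ℂ) *
          Complex.exp (2 * (Real.pi : ℂ) * Complex.I * (h : ℂ) *
            ((∑ i, (j.1 i : ℝ) * x i : ℝ) : ℂ))‖
      ≤ ν ^ (ν - 1) * d * 5 ^ (d - 1) / (2 ^ ν * Real.pi ^ ((d : ℝ) / 2 + 2 * ν)) *
          (Real.Gamma (ν + (d : ℝ) / 2) / Real.Gamma ν) * (h * ℓ * m) ^ (-(2 * ν)) := by
  rcases Nat.eq_zero_or_pos d with rfl | hd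
  · have : IsEmpty {j : Fin 0 → ℤ // j ∉ Jm 0 m} :=
      ⟨fun j => j.2 (mem_Jm_iff_abs_le.2 finZeroElim)⟩
    simp
  have hν0 : 0 < ν := by linarith
  obtain ⟨hsum, htsum⟩ := summable_and_tsum_le_of_sum_Jm_sdiff_le
    (fun j => Chat_nonneg hν0 hℓ0 (lpt d h j)) m (sum_Jm_sdiff_Chat_le hd hν0 hℓ0 hh0 hm)
  have hnorm (j : {j : Fin d → ℤ // j ∉ Jm d m}) :
      ‖(Chat d ν ℓ (lpt d h j.1) : ℂ) * Complex.exp (2 * (π : ℂ) * Complex.I * (h : ℂ) *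
        ((∑ i, (j.1 i : ℝ) * x i : ℝ) : ℂ))‖ = Chat d ν ℓ (lpt d h j.1) := by
    rw [norm_ofReal_mul_exp_two_pi_I_mul, abs_of_nonneg (Chat_nonneg hν0 hℓ0 _)]
  calc _ ≤ h ^ d * ∑' j : {j : Fin d → ℤ // j ∉ Jm d m}, Chat d ν ℓ (lpt d h j.1) := by
        rw [norm_mul, norm_pow, Complex.norm_real, Real.norm_of_nonneg hh0.le]
        gcongr
        exact (norm_tsum_le_tsum_norm (hsum.congr fun j => (hnorm j).symm)).trans_eq
          (tsum_congr hnorm)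
    _ ≤ h ^ d * (shellConst d ν ℓ h * m ^ (-(2 * ν)) / (2 * ν)) := by gcongr
    _ ≤ _ := pow_mul_shellConst_mul_rpow_le hd hν hℓ0 hh0 (by exact_mod_cast hm)

theorem stmt_4 (d : ℕ) (hd : 1 ≤ d) (ν : ℝ) (hν : 1 / 2 ≤ ν) (ℓ : ℝ) (hℓ0 : 0 < ℓ)
    (hℓ : ℓ ≤ (Real.log 2)⁻¹ * Real.sqrt (ν / (2 * d))) (h : ℝ) (hh0 : 0 < h)
    (hh : h ≤ (1 + Real.sqrt (8 * ν) * ℓ)⁻¹) (m : ℕ) (hm : 1 ≤ m)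
    (x : EuclideanSpace ℝ (Fin d)) :
    ‖(h : ℂ) ^ d * ∑' j : {j : Fin d → ℤ // j ∉ Jm d m},
        (Chat d ν ℓ (lpt d h j.1) : ℂ) *
          Complex.exp (2 * (Real.pi : ℂ) * Complex.I * (h : ℂ) *
            ((∑ i, (j.1 i : ℝ) * x i : ℝ) : ℂ))‖
      ≤ ν ^ (ν - 1) * d * 5 ^ (d - 1) / (2 ^ ν * Real.pi ^ ((d : ℝ) / 2 + 2 * ν)) *
          (Real.Gamma (ν + (d : ℝ) / 2) / Real.Gamma ν) * (h * ℓ * m) ^ (-(2 * ν)) :=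
  stmt_4_general d ν hν ℓ hℓ0 h hh0 m hm x
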